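/- Let (u_n) be a sequence of continuous functions on ℙ¹ with ‖u_n‖_{W^{1,2}} ≤ c₁λⁿ and [u_n]_{log^p} ≤ c₂n^q, where p > 1/2, q > 0, 0 < λ < 1, c₁, c₂ > 0. Then there exist constants c > 0 and 0 < τ < 1 (depending only on c₁, c₂, λ, p, q) such that ‖u_n‖_∞ ≤ c τⁿ for every n ≥ 1. -/

import Mathlib

/-! Dividing `u_n` by `λⁿ` puts it in the `c₁`-ball of `W^{1,2}` with log-Hölder seminorm at most
`Mₙ = max(1, c₂) n^q λ⁻ⁿ`, so the Moser–Trudinger bound gives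
`‖u_n‖_∞ ≤ A Mₙ^{1/(2p)} λⁿ ≍ n^{q/(2p)} (λ^{1-1/(2p)})ⁿ`. As `p > 1/2` the base is `< 1`, and the
polynomial factor is absorbed by a geometric rate `τ` slightly slower than `λ^{1-1/(2p)}`. -/

noncomputable section

abbrev P1 := Projectivization ℂ (EuclideanSpace ℂ (Fin 2))

instance : TopologicalSpace P1 :=
  inferInstanceAs (TopologicalSpace
    (Quotient (projectivizationSetoid ℂ (EuclideanSpace ℂ (Fin 2)))))

/-- The distance `d(x,y) = |det(v,w)|/(‖v‖‖w‖)` on `ℙ¹`. -/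
def dP (x y : P1) : ℝ :=
  ‖x.rep 0 * y.rep 1 - x.rep 1 * y.rep 0‖ / (‖x.rep‖ * ‖y.rep‖)

def logStar (t : ℝ) : ℝ := 1 + |Real.log t|

open Filter Topology

theorem tendsto_rpow_natCast_mul_pow_atTop_nhds_zero (s : ℝ) {r : ℝ} (hr0 : 0 < r) (hr1 : r < 1) :
    Tendsto (fun n : ℕ => (n : ℝ) ^ s * r ^ n) atTop (𝓝 0) := by
  have hb : 0 < -Real.log r := neg_pos.mpr (Real.log_neg hr0 hr1)
  refine ((tendsto_rpow_mul_exp_neg_mul_atTop_nhds_zero s _ hb).comp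
    tendsto_natCast_atTop_atTop).congr fun n => ?_
  rw [Function.comp_apply, neg_neg, ← Real.rpow_natCast, Real.rpow_def_of_pos hr0]

theorem exists_rpow_natCast_mul_pow_le_mul_pow (s : ℝ) {r : ℝ} (hr0 : 0 < r) (hr1 : r < 1) :
    ∃ C > (0 : ℝ), ∃ τ : ℝ, 0 < τ ∧ τ < 1 ∧ ∀ n : ℕ, (n : ℝ) ^ s * r ^ n ≤ C * τ ^ n := by
  set τ := √r
  have hτ0 : 0 < τ := Real.sqrt_pos.mpr hr0
  have hτ1 : τ < 1 := (Real.sqrt_lt' one_pos).mpr (by rwa [one_pow])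
  obtain ⟨B, hB⟩ := (tendsto_rpow_natCast_mul_pow_atTop_nhds_zero s hτ0 hτ1).bddAbove_range
  refine ⟨max B 1, by positivity, τ, hτ0, hτ1, fun n => ?_⟩
  calc (n : ℝ) ^ s * r ^ n = ((n : ℝ) ^ s * τ ^ n) * τ ^ n := by
        rw [mul_assoc, ← mul_pow, Real.mul_self_sqrt hr0.le]
    _ ≤ max B 1 * τ ^ n := by
        gcongr
        exact (hB ⟨n, rfl⟩).trans (le_max_left _ _)

theorem abs_le_mul_of_scaled_bounds {X : Type*} (Wnorm : (X → ℝ) → ℝ) (w : X → X → ℝ)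
    {c₁ A e : ℝ}
    (hW_smul : ∀ (c : ℝ) (u : X → ℝ), Wnorm (fun x => c * u x) = |c| * Wnorm u)
    (hkey : ∀ u : X → ℝ, Wnorm u ≤ c₁ → ∀ M : ℝ, 1 ≤ M →
      (∀ x y : X, x ≠ y → |u x - u y| * w x y ≤ M) → ∀ x, |u x| ≤ A * M ^ e)
    {u : X → ℝ} {t M : ℝ} (ht : 0 < t) (hM : 1 ≤ M) (hWu : Wnorm u ≤ c₁ * t)
    (hsemi : ∀ x y : X, x ≠ y → |u x - u y| * w x y ≤ M * t) (x : X) :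
    |u x| ≤ A * M ^ e * t := by
  have hscaled := hkey (fun y => t⁻¹ * u y) ?_ M hM ?_ x
  · rwa [abs_mul, abs_inv, abs_of_pos ht, inv_mul_le_iff₀ ht, mul_comm] at hscaled
  · rwa [hW_smul, abs_inv, abs_of_pos ht, inv_mul_le_iff₀ ht, mul_comm]
  · intro x y hxy
    rw [← mul_sub, abs_mul, abs_inv, abs_of_pos ht, mul_assoc, inv_mul_le_iff₀ ht, mul_comm t]
    exact hsemi x y hxy

theorem stmt_12_general (p q lam c₁ c₂ : ℝ) (hp : 1 / 2 < p) (hq : 0 < q)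
    (hlam0 : 0 < lam) (hlam1 : lam < 1)
    (Wnorm : (P1 → ℝ) → ℝ)
    (hW_smul : ∀ (c : ℝ) (u : P1 → ℝ), Wnorm (fun x => c * u x) = |c| * Wnorm u)
    (A : ℝ) (hA : 0 < A)
    (hkey : ∀ u : P1 → ℝ, Wnorm u ≤ c₁ → ∀ M : ℝ, 1 ≤ M →
      (∀ x y : P1, x ≠ y → |u x - u y| * logStar (dP x y) ^ p ≤ M) →
      ∀ x, |u x| ≤ A * M ^ (1 / (2 * p)))
    (u : ℕ → P1 → ℝ)
    (hWn : ∀ n : ℕ, 1 ≤ n → Wnorm (u n) ≤ c₁ * lam ^ n)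
    (hlogn : ∀ n : ℕ, 1 ≤ n → ∀ x y : P1, x ≠ y →
      |u n x - u n y| * logStar (dP x y) ^ p ≤ c₂ * (n : ℝ) ^ q) :
    ∃ c > (0 : ℝ), ∃ τ : ℝ, 0 < τ ∧ τ < 1 ∧
      ∀ n : ℕ, 1 ≤ n → ∀ x, |u n x| ≤ c * τ ^ n := by
  set e := 1 / (2 * p)
  have he1 : e < 1 := by rw [div_lt_one (by linarith)]; linarith
  set K := max 1 c₂
  obtain ⟨C, hC, τ, hτ0, hτ1, hdom⟩ := exists_rpow_natCast_mul_pow_le_mul_pow (q * e)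
    (Real.rpow_pos_of_pos hlam0 (1 - e)) (Real.rpow_lt_one hlam0.le hlam1 (by linarith))
  refine ⟨A * K ^ e * C, by positivity, τ, hτ0, hτ1, fun n hn x => ?_⟩
  have hlamn : 0 < lam ^ n := pow_pos hlam0 n
  have hn1 : (1 : ℝ) ≤ n := by exact_mod_cast hn
  have hM : 1 ≤ K * (n : ℝ) ^ q / lam ^ n := by
    rw [one_le_div hlamn]
    calc lam ^ n ≤ 1 := pow_le_one₀ hlam0.le hlam1.le
      _ ≤ K * (n : ℝ) ^ q := one_le_mul_of_one_le_of_one_le (le_max_left _ _)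
          (Real.one_le_rpow hn1 hq.le)
  have hsemi : ∀ x y, x ≠ y → |u n x - u n y| * logStar (dP x y) ^ p
      ≤ K * (n : ℝ) ^ q / lam ^ n * lam ^ n := fun x y hxy => by
    rw [div_mul_cancel₀ _ hlamn.ne']
    exact (hlogn n hn x y hxy).trans (by gcongr; exact le_max_right _ _)
  have hrescale : (K * (n : ℝ) ^ q / lam ^ n) ^ e * lam ^ n
      = K ^ e * ((n : ℝ) ^ (q * e) * (lam ^ (1 - e)) ^ n) := by
    have hpow : (lam ^ (1 - e)) ^ n = lam ^ n / (lam ^ n) ^ e := by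
      rw [← Real.rpow_mul_natCast hlam0.le, mul_comm, Real.rpow_natCast_mul hlam0.le,
        Real.rpow_sub hlamn, Real.rpow_one]
    rw [hpow, Real.div_rpow (by positivity) hlamn.le,
      Real.mul_rpow (by positivity) (by positivity), ← Real.rpow_mul (by positivity)]
    field_simp
  calc |u n x| ≤ A * (K * (n : ℝ) ^ q / lam ^ n) ^ e * lam ^ n :=
        abs_le_mul_of_scaled_bounds Wnorm _ hW_smul hkey hlamn hM (hWn n hn) hsemi x
    _ = A * K ^ e * ((n : ℝ) ^ (q * e) * (lam ^ (1 - e)) ^ n) := by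
        rw [mul_assoc, hrescale, mul_assoc]
    _ ≤ A * K ^ e * (C * τ ^ n) := mul_le_mul_of_nonneg_left (hdom n) (by positivity)
    _ = A * K ^ e * C * τ ^ n := by ring

/-- If `(u_n)` are continuous functions on `ℙ¹` with `‖u_n‖_{W^{1,2}} ≤ c₁λⁿ` and
`[u_n]_{log^p} ≤ c₂ n^q` (`p > 1/2`, `q > 0`, `0 < λ < 1`), then `‖u_n‖_∞ ≤ c τⁿ` for some
constants `c > 0`, `0 < τ < 1` depending only on `c₁, c₂, λ, p, q`.
The `W^{1,2}`-norm of `ℙ¹` enters through its homogeneity and the Moser–Trudinger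
consequence: any `u` in the `c₁`-ball of `W^{1,2}` with `[u]_{log^p} ≤ M`, `M ≥ 1`,
satisfies `‖u‖_∞ ≤ A M^{1/(2p)}`. -/
theorem stmt_12 (p q lam c₁ c₂ : ℝ) (hp : 1 / 2 < p) (hq : 0 < q)
    (hlam0 : 0 < lam) (hlam1 : lam < 1) (hc₁ : 0 < c₁) (hc₂ : 0 < c₂)
    (Wnorm : (P1 → ℝ) → ℝ)
    (hW_smul : ∀ (c : ℝ) (u : P1 → ℝ), Wnorm (fun x => c * u x) = |c| * Wnorm u)
    (A : ℝ) (hA : 0 < A)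
    (hkey : ∀ u : P1 → ℝ, Wnorm u ≤ c₁ → ∀ M : ℝ, 1 ≤ M →
      (∀ x y : P1, x ≠ y → |u x - u y| * logStar (dP x y) ^ p ≤ M) →
      ∀ x, |u x| ≤ A * M ^ (1 / (2 * p)))
    (u : ℕ → P1 → ℝ) (hcont : ∀ n, Continuous (u n))
    (hWn : ∀ n : ℕ, 1 ≤ n → Wnorm (u n) ≤ c₁ * lam ^ n)
    (hlogn : ∀ n : ℕ, 1 ≤ n → ∀ x y : P1, x ≠ y →
      |u n x - u n y| * logStar (dP x y) ^ p ≤ c₂ * (n : ℝ) ^ q) :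
    ∃ c > (0 : ℝ), ∃ τ : ℝ, 0 < τ ∧ τ < 1 ∧
      ∀ n : ℕ, 1 ≤ n → ∀ x, |u n x| ≤ c * τ ^ n :=
  stmt_12_general p q lam c₁ c₂ hp hq hlam0 hlam1 Wnorm hW_smul A hA hkey u hWn hlogn
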